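/- arXiv:1703.09206 — 2 statements merged into one kernel-verified Lean document; each statement's English description precedes it below -/
import Mathlib

section
/- Let f, g ∈ L²(ℝ) be supported in [0, ∞). For fixed integers 1 ≤ j < k and S₀ > 0, the inner product term λ^{−j−k} ∫₀^{S₀} f(λ^{−j} x) g(λ^{−k} x) dx tends to 0 as λ → ∞, provided f is continuous with f(0) = 0. -/
/-!
On `[0, S₀]` the continuous `f` is bounded by some `M`. After the substitution `y = λ^{-k} x`
the factor `λ^{-k} |g(λ^{-k} x)|` integrates to at most `∫₀^{S₀} |g|`, which is finite since
`g ∈ L²` is locally integrable. The term is thus `O(λ^{-j})`, and `j ≥ 1`.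
-/

open MeasureTheory Filter Set

section ScaledIntegrals

variable {g : ℝ → ℝ} {S c : ℝ}

lemma IntervalIntegrable.comp_mul_left_of_le_one (hg : IntervalIntegrable g volume 0 S)
    (hS : 0 ≤ S) (hc : 0 < c) (hc1 : c ≤ 1) :
    IntervalIntegrable (fun x => g (c * x)) volume 0 S := by
  have hcS : IntervalIntegrable g volume 0 (c * S) := by
    refine hg.mono_set ?_
    rw [uIcc_of_le (by positivity), uIcc_of_le hS]
    exact Icc_subset_Icc le_rfl (mul_le_of_le_one_left hS hc1)
  simpa [hc.ne'] using hcS.comp_mul_left (c := c)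

lemma mul_integral_abs_comp_mul_le (hg : IntervalIntegrable g volume 0 S)
    (hS : 0 ≤ S) (hc : 0 ≤ c) (hc1 : c ≤ 1) :
    c * ∫ x in (0:ℝ)..S, |g (c * x)| ≤ ∫ x in (0:ℝ)..S, |g x| := by
  rw [← smul_eq_mul, intervalIntegral.smul_integral_comp_mul_left (fun x => |g x|), mul_zero]
  exact intervalIntegral.integral_mono_interval le_rfl (by positivity)
    (mul_le_of_le_one_left hS hc1) (Eventually.of_forall fun x => abs_nonneg _) hg.abs

lemma abs_mul_mul_integral_comp_mul_le {f : ℝ → ℝ} {M a b : ℝ}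
    (hf : ∀ x ∈ Icc 0 S, |f x| ≤ M) (hg : IntervalIntegrable g volume 0 S) (hS : 0 ≤ S)
    (ha : 0 ≤ a) (ha1 : a ≤ 1) (hb : 0 < b) (hb1 : b ≤ 1) :
    |a * b * ∫ x in (0:ℝ)..S, f (a * x) * g (b * x)| ≤ a * (M * ∫ x in (0:ℝ)..S, |g x|) := by
  have hM : 0 ≤ M := (abs_nonneg _).trans (hf 0 (left_mem_Icc.2 hS))
  have hprod : |∫ x in (0:ℝ)..S, f (a * x) * g (b * x)| ≤ M * ∫ x in (0:ℝ)..S, |g (b * x)| := by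
    rw [← Real.norm_eq_abs, ← intervalIntegral.integral_const_mul M fun x => |g (b * x)|]
    refine intervalIntegral.norm_integral_le_of_norm_le hS (Eventually.of_forall ?_)
      ((hg.comp_mul_left_of_le_one hS hb hb1).abs.const_mul M)
    rintro x ⟨hx0, hxS⟩
    rw [Real.norm_eq_abs, abs_mul]
    have hax : a * x ∈ Icc 0 S := ⟨by positivity, (mul_le_of_le_one_left hx0.le ha1).trans hxS⟩
    exact mul_le_mul_of_nonneg_right (hf _ hax) (abs_nonneg _)
  calc |a * b * ∫ x in (0:ℝ)..S, f (a * x) * g (b * x)|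
      ≤ a * (M * (b * ∫ x in (0:ℝ)..S, |g (b * x)|)) := by
        rw [abs_mul, abs_of_nonneg (by positivity), mul_left_comm M, mul_assoc a b]
        gcongr
    _ ≤ a * (M * ∫ x in (0:ℝ)..S, |g x|) := by
        gcongr
        exact mul_integral_abs_comp_mul_le hg hS hb.le hb1

end ScaledIntegrals

theorem pseudo_orthogonality_general (f g : ℝ → ℝ)
    (hg2 : MemLp g 2 volume) (hfc : Continuous f)
    (j k : ℕ) (hj : 1 ≤ j) (S₀ : ℝ) (hS₀ : 0 < S₀) :
    Tendsto (fun lam : ℝ =>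
        lam ^ (-(j : ℤ) - (k : ℤ)) *
          ∫ x in (0:ℝ)..S₀, f (lam ^ (-(j : ℤ)) * x) * g (lam ^ (-(k : ℤ)) * x))
      atTop (nhds 0) := by
  obtain ⟨M, hM⟩ := (isCompact_Icc (a := 0) (b := S₀)).exists_bound_of_continuousOn
    hfc.continuousOn
  have hg : IntervalIntegrable g volume 0 S₀ := by
    rw [intervalIntegrable_iff_integrableOn_Ioc_of_le hS₀.le]
    exact (hg2.restrict _).integrable one_le_two
  have hdecay : Tendsto (fun lam : ℝ => lam ^ (-(j : ℤ)) * (M * ∫ x in (0:ℝ)..S₀, |g x|))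
      atTop (nhds 0) := by
    simpa using (tendsto_zpow_atTop_zero (𝕜 := ℝ) (by omega : -(j : ℤ) < 0)).mul_const _
  refine squeeze_zero_norm' ?_ hdecay
  filter_upwards [eventually_ge_atTop 1] with lam hlam
  have hlam0 : 0 < lam := one_pos.trans_le hlam
  rw [sub_eq_add_neg, zpow_add₀ hlam0.ne', Real.norm_eq_abs]
  exact abs_mul_mul_integral_comp_mul_le hM hg hS₀.le (by positivity)
    (zpow_le_one_of_nonpos₀ hlam (by omega)) (by positivity)
    (zpow_le_one_of_nonpos₀ hlam (by omega))

/-- Pseudo-orthogonality: profiles of different scales almost do not interact. -/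
theorem pseudo_orthogonality (f g : ℝ → ℝ)
    (hf2 : MemLp f 2 volume) (hg2 : MemLp g 2 volume)
    (hfsupp : ∀ x : ℝ, x < 0 → f x = 0) (hgsupp : ∀ x : ℝ, x < 0 → g x = 0)
    (hfc : Continuous f) (hf0 : f 0 = 0)
    (j k : ℕ) (hj : 1 ≤ j) (hjk : j < k) (S₀ : ℝ) (hS₀ : 0 < S₀) :
    Tendsto (fun lam : ℝ =>
        lam ^ (-(j : ℤ) - (k : ℤ)) *
          ∫ x in (0:ℝ)..S₀, f (lam ^ (-(j : ℤ)) * x) * g (lam ^ (-(k : ℤ)) * x))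
      atTop (nhds 0) :=
  pseudo_orthogonality_general f g hg2 hfc j k hj S₀ hS₀
end

section
/- Let g(y) = max(e^{ay} − e^{by}, 0) with real constants a > b. Then for τ > 0 and x ∈ ℝ, (1/(2√(πτ))) ∫_{−∞}^{∞} g(y) e^{−(x−y)²/(4τ)} dy = (1/2) e^{ax + a²τ} Erfc(−x/(2√τ) − a√τ) − (1/2) e^{bx + b²τ} Erfc(−x/(2√τ) − b√τ). -/
open MeasureTheory

/-- The complementary error function. -/
noncomputable def erfc (x : ℝ) : ℝ :=
  (2 / Real.sqrt Real.pi) * ∫ t in Set.Ioi x, Real.exp (-t ^ 2)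

open Set in
lemma integral_Ioi_comp_add_right (g : ℝ → ℝ) (a c : ℝ) :
    (∫ x in Ioi a, g (x + c)) = ∫ x in Ioi (a + c), g x := by
  rw [← integral_indicator measurableSet_Ioi, ← integral_indicator measurableSet_Ioi,
    ← MeasureTheory.integral_add_right_eq_self
      (fun x => Set.indicator (Ioi (a + c)) g x) c]
  congr 1
  ext x
  rw [← Set.indicator_comp_right (fun x : ℝ => x + c)]
  have : (fun x : ℝ => x + c) ⁻¹' Ioi (a + c) = Ioi a := by
    ext y; simp [Set.mem_preimage]
  rw [this]
  rfl

lemma gauss_integrable (m τ : ℝ) (hτ : 0 < τ) :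
    IntegrableOn (fun y : ℝ => Real.exp (-(y - m) ^ 2 / (4 * τ))) (Set.Ioi 0) := by
  have h : Integrable (fun y : ℝ => Real.exp (-(1 / (4 * τ)) * y ^ 2)) :=
    integrable_exp_neg_mul_sq (by positivity)
  have h2 := h.comp_sub_right m
  have : (fun y : ℝ => Real.exp (-(1 / (4 * τ)) * (y - m) ^ 2))
      = fun y : ℝ => Real.exp (-(y - m) ^ 2 / (4 * τ)) := by
    funext y; congr 1; ring
  rw [this] at h2
  exact h2.integrableOn

lemma complete_square (c τ x : ℝ) (hτ : 0 < τ) (y : ℝ) :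
    Real.exp (c * y) * Real.exp (-(x - y) ^ 2 / (4 * τ))
      = Real.exp (c * x + c ^ 2 * τ) * Real.exp (-(y - (x + 2 * c * τ)) ^ 2 / (4 * τ)) := by
  rw [← Real.exp_add, ← Real.exp_add]
  congr 1
  field_simp
  ring

open Set in
lemma key_integral (c τ x : ℝ) (hτ : 0 < τ) :
    (∫ y in Ioi (0 : ℝ), Real.exp (c * y) * Real.exp (-(x - y) ^ 2 / (4 * τ)))
      = Real.sqrt (Real.pi * τ) * Real.exp (c * x + c ^ 2 * τ) *
          erfc (-(x / (2 * Real.sqrt τ)) - c * Real.sqrt τ) := by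
  have hst : (0 : ℝ) < Real.sqrt τ := Real.sqrt_pos.mpr hτ
  set m := x + 2 * c * τ with hm
  set s := 2 * Real.sqrt τ with hs
  have hs0 : (0 : ℝ) < s := by positivity
  have hss : s ^ 2 = 4 * τ := by
    rw [hs]; rw [mul_pow]; rw [Real.sq_sqrt hτ.le]; ring
  calc (∫ y in Ioi (0 : ℝ), Real.exp (c * y) * Real.exp (-(x - y) ^ 2 / (4 * τ)))
      = ∫ y in Ioi (0 : ℝ), Real.exp (c * x + c ^ 2 * τ) *
          Real.exp (-(y - m) ^ 2 / (4 * τ)) := by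
        apply setIntegral_congr_fun measurableSet_Ioi
        intro y _
        exact complete_square c τ x hτ y
    _ = Real.exp (c * x + c ^ 2 * τ) * ∫ y in Ioi (0 : ℝ),
          Real.exp (-(y - m) ^ 2 / (4 * τ)) := by
        rw [integral_const_mul]
    _ = Real.exp (c * x + c ^ 2 * τ) * ∫ y in Ioi (0 : ℝ),
          (fun u => Real.exp (-(u - m / s) ^ 2)) (s⁻¹ * y) := by
        congr 1
        apply setIntegral_congr_fun measurableSet_Ioi
        intro y _
        simp only
        congr 1
        rw [div_eq_iff (by positivity : (4 : ℝ) * τ ≠ 0)]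
        rw [← hss]
        field_simp
    _ = Real.exp (c * x + c ^ 2 * τ) * (s⁻¹)⁻¹ •
          ∫ u in Ioi (s⁻¹ * 0), Real.exp (-(u - m / s) ^ 2) := by
        rw [integral_comp_mul_left_Ioi (fun u => Real.exp (-(u - m / s) ^ 2)) 0
          (inv_pos.mpr hs0)]
    _ = Real.exp (c * x + c ^ 2 * τ) * s *
          ∫ t in Ioi (-(m / s)), Real.exp (-t ^ 2) := by
        rw [inv_inv, smul_eq_mul, mul_zero]
        rw [show (∫ u in Ioi (0 : ℝ), Real.exp (-(u - m / s) ^ 2))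
            = ∫ u in Ioi (0 : ℝ), (fun t => Real.exp (-t ^ 2)) (u + -(m / s)) by
          apply setIntegral_congr_fun measurableSet_Ioi
          intro u _; simp [sub_eq_add_neg]]
        rw [integral_Ioi_comp_add_right (fun t => Real.exp (-t ^ 2)) 0 (-(m / s))]
        rw [zero_add]
        ring
  have harg : -(m / s) = -(x / (2 * Real.sqrt τ)) - c * Real.sqrt τ := by
    rw [hm, hs]
    have : τ = Real.sqrt τ * Real.sqrt τ := (Real.mul_self_sqrt hτ.le).symm
    field_simp
    ring_nf
    rw [Real.sq_sqrt hτ.le]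
  rw [harg]
  have hπ : (0 : ℝ) < Real.sqrt Real.pi := Real.sqrt_pos.mpr Real.pi_pos
  rw [erfc]
  have : Real.sqrt (Real.pi * τ) = Real.sqrt Real.pi * Real.sqrt τ :=
    Real.sqrt_mul Real.pi_pos.le τ
  rw [this, hs]
  field_simp

lemma term_integrable (c τ x : ℝ) (hτ : 0 < τ) :
    IntegrableOn (fun y : ℝ => Real.exp (c * y) * Real.exp (-(x - y) ^ 2 / (4 * τ)))
      (Set.Ioi 0) := by
  have : (fun y : ℝ => Real.exp (c * y) * Real.exp (-(x - y) ^ 2 / (4 * τ)))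
      = fun y : ℝ => Real.exp (c * x + c ^ 2 * τ) *
          Real.exp (-(y - (x + 2 * c * τ)) ^ 2 / (4 * τ)) := by
    funext y; exact complete_square c τ x hτ y
  rw [this]
  exact (gauss_integrable (x + 2 * c * τ) τ hτ).const_mul _

/-- Heat-kernel convolution of the payoff-type initial data
`g(y) = max(e^{ay} − e^{by}, 0)` with `a > b`. -/
theorem heat_convolution_payoff (a b : ℝ) (hab : b < a) (τ x : ℝ) (hτ : 0 < τ) :
    (1 / (2 * Real.sqrt (Real.pi * τ))) *
        ∫ y : ℝ, max (Real.exp (a * y) - Real.exp (b * y)) 0 *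
          Real.exp (-(x - y) ^ 2 / (4 * τ))
      = (1 / 2) * Real.exp (a * x + a ^ 2 * τ) *
          erfc (-(x / (2 * Real.sqrt τ)) - a * Real.sqrt τ)
        - (1 / 2) * Real.exp (b * x + b ^ 2 * τ) *
          erfc (-(x / (2 * Real.sqrt τ)) - b * Real.sqrt τ) := by
  have hind : (fun y : ℝ => max (Real.exp (a * y) - Real.exp (b * y)) 0 *
        Real.exp (-(x - y) ^ 2 / (4 * τ)))
      = Set.indicator (Set.Ioi 0) (fun y : ℝ =>
          (Real.exp (a * y) - Real.exp (b * y)) * Real.exp (-(x - y) ^ 2 / (4 * τ))) := by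
    funext y
    by_cases hy : 0 < y
    · rw [Set.indicator_of_mem (Set.mem_Ioi.mpr hy)]
      congr 1
      apply max_eq_left
      have : b * y < a * y := by nlinarith
      have := Real.exp_lt_exp.mpr this
      linarith
    · rw [Set.indicator_of_notMem (by simpa using hy)]
      have hy' : y ≤ 0 := le_of_not_gt hy
      have : a * y ≤ b * y := by nlinarith
      have := Real.exp_le_exp.mpr this
      rw [max_eq_right (by linarith)]
      ring
  rw [hind, integral_indicator measurableSet_Ioi]
  have hsplit : (∫ y in Set.Ioi (0 : ℝ),
        (Real.exp (a * y) - Real.exp (b * y)) * Real.exp (-(x - y) ^ 2 / (4 * τ)))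
      = (∫ y in Set.Ioi (0 : ℝ), Real.exp (a * y) * Real.exp (-(x - y) ^ 2 / (4 * τ)))
        - ∫ y in Set.Ioi (0 : ℝ), Real.exp (b * y) * Real.exp (-(x - y) ^ 2 / (4 * τ)) := by
    rw [← integral_sub (term_integrable a τ x hτ) (term_integrable b τ x hτ)]
    apply setIntegral_congr_fun measurableSet_Ioi
    intro y _
    ring
  rw [hsplit, key_integral a τ x hτ, key_integral b τ x hτ]
  have h0 : (0 : ℝ) < Real.sqrt (Real.pi * τ) :=
    Real.sqrt_pos.mpr (by positivity)
  field_simp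
end
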